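/- arXiv:2007.13893 — 2 statements merged into one kernel-verified Lean document; each statement's English description precedes it below -/
import Mathlib

section
/- Let α and β be measurable spaces, let K be a Markov kernel from α to β, and let μ and ν be probability measures on α with ν absolutely continuous with respect to μ. Let ρ = μ ⊗ₘ K be the measure on α × β determined by ρ(A × B) = ∫_A K(x)(B) dμ(x), and let μ′ = μ.bind K and ν′ = ν.bind K be the measures on β given by (μ.bind K)(B) = ∫ K(x)(B) dμ(x). Then the conditional expectation under ρ of the function (x,y) ↦ (dν/dμ)(x), taken with respect to the σ-algebra on α × β generated by the second coordinate projection, is ρ-almost everywhere equal to the function (x,y) ↦ (dν′/dμ′)(y). -/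
open MeasureTheory ProbabilityTheory
open scoped ProbabilityTheory

/-! The function `(dν/dμ) ∘ fst` is the density of `ν ⊗ₘ K` with respect to `μ ⊗ₘ K`. Conditioning
a density on a map yields the density of the pushforward measures, and the pushforwards of
`μ ⊗ₘ K` and `ν ⊗ₘ K` under `snd` are `μ.bind K` and `ν.bind K`. -/

/-- Key displayed computation in the proof of the paper's Theorem 5: for a Markov kernel
`K` and `ν ≪ μ`, the conditional expectation under `ρ = μ ⊗ₘ K` of `(x,y) ↦ (dν/dμ)(x)`
given the σ-algebra generated by the second coordinate is a.e. `(x,y) ↦ (d(ν∘K)/d(μ∘K))(y)`. -/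
theorem stmt_3 {α β : Type*} [MeasurableSpace α] [MeasurableSpace β]
    (K : Kernel α β) [IsMarkovKernel K]
    (μ ν : Measure α) [IsProbabilityMeasure μ] [IsProbabilityMeasure ν]
    (hac : ν ≪ μ) :
    (μ ⊗ₘ K)[(fun p : α × β => (ν.rnDeriv μ p.1).toReal) |
        MeasurableSpace.comap (Prod.snd : α × β → β) inferInstance]
      =ᵐ[μ ⊗ₘ K]
    fun p : α × β => ((ν.bind K).rnDeriv (μ.bind K) p.2).toReal := by
  have hrnDeriv : (fun p : α × β => (ν.rnDeriv μ p.1).toReal)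
      =ᵐ[μ ⊗ₘ K] fun p => ((ν ⊗ₘ K).rnDeriv (μ ⊗ₘ K) p).toReal :=
    ((rnDeriv_measure_compProd_left ν μ K).fun_comp ENNReal.toReal).symm
  calc (μ ⊗ₘ K)[(fun p : α × β => (ν.rnDeriv μ p.1).toReal) |
        MeasurableSpace.comap Prod.snd inferInstance]
      =ᵐ[μ ⊗ₘ K] (μ ⊗ₘ K)[(fun p => ((ν ⊗ₘ K).rnDeriv (μ ⊗ₘ K) p).toReal) |
        MeasurableSpace.comap Prod.snd inferInstance] := condExp_congr_ae hrnDeriv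
    _ =ᵐ[μ ⊗ₘ K] fun p => (((ν ⊗ₘ K).snd).rnDeriv ((μ ⊗ₘ K).snd) p.2).toReal :=
      (toReal_rnDeriv_map (hac.compProd_left K) measurable_snd).symm
    _ = fun p => ((ν.bind K).rnDeriv (μ.bind K) p.2).toReal := by
      rw [Measure.snd_compProd, Measure.snd_compProd]
end

section
/- Let α be a measurable space, let K be a Markov kernel from α to α, and let μ and ν be probability measures on α that are both invariant under K (that is, μ.bind K = μ and ν.bind K = ν) with ν absolutely continuous with respect to μ. Write d = dν/dμ and let ρ = μ ⊗ₘ K be the measure on α × α. Then the conditional expectation under ρ of the function (x,y) ↦ d(x), taken with respect to the σ-algebra generated by the second coordinate projection, is ρ-almost everywhere equal to the function (x,y) ↦ d(y). -/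
open MeasureTheory ProbabilityTheory
open scoped ProbabilityTheory

/-!
With `σ = ν ⊗ₘ K ≪ ρ = μ ⊗ₘ K`, the density `dσ/dρ` is `(x, y) ↦ d x`. Conditioning a density on
a coordinate yields the density of the pushforwards along it, and the second marginals of `σ` and
`ρ` are `ν.bind K = ν` and `μ.bind K = μ`, whose density is `d` again.
-/

namespace ProbabilityTheory

variable {α β : Type*} [MeasurableSpace α] [MeasurableSpace β]

lemma condExp_comap_snd_toReal_rnDeriv_fst (K : Kernel α β) [IsFiniteKernel K]
    {μ ν : Measure α} [IsFiniteMeasure μ] [IsFiniteMeasure ν] (hνμ : ν ≪ μ) :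
    (μ ⊗ₘ K)[fun p ↦ (ν.rnDeriv μ p.1).toReal |
        MeasurableSpace.comap (Prod.snd : α × β → β) inferInstance]
      =ᵐ[μ ⊗ₘ K] fun p ↦ ((K ∘ₘ ν).rnDeriv (K ∘ₘ μ) p.2).toReal := by
  have h_density : (fun p : α × β ↦ ((ν ⊗ₘ K).rnDeriv (μ ⊗ₘ K) p).toReal)
      =ᵐ[μ ⊗ₘ K] fun p ↦ (ν.rnDeriv μ p.1).toReal :=
    (rnDeriv_measure_compProd_left ν μ K).fun_comp ENNReal.toReal
  have h_map := toReal_rnDeriv_map (hνμ.compProd_left K) measurable_snd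
  rw [← Measure.snd, ← Measure.snd, Measure.snd_compProd, Measure.snd_compProd] at h_map
  exact (condExp_congr_ae h_density).symm.trans h_map.symm

end ProbabilityTheory

/-- Forward direction of the paper's Theorem 5 in abstract combined-state form:
if `μ` and `ν` are both invariant under the Markov kernel `K` and `ν ≪ μ`, the
stationary density ratio `d = dν/dμ` satisfies `E_{μ ⊗ₘ K}[d(X) | X′] = d(X′)` a.e. -/
theorem stmt_4 {α : Type*} [MeasurableSpace α]
    (K : Kernel α α) [IsMarkovKernel K]
    (μ ν : Measure α) [IsProbabilityMeasure μ] [IsProbabilityMeasure ν]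
    (hμinv : μ.bind K = μ) (hνinv : ν.bind K = ν)
    (hac : ν ≪ μ)
    (d : α → ℝ) (hd : d = fun x => (ν.rnDeriv μ x).toReal) :
    (μ ⊗ₘ K)[(fun p : α × α => d p.1) |
        MeasurableSpace.comap (Prod.snd : α × α → α) inferInstance]
      =ᵐ[μ ⊗ₘ K] fun p : α × α => d p.2 := by
  subst hd
  have h := condExp_comap_snd_toReal_rnDeriv_fst K hac
  rwa [hμinv, hνinv] at h
end
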